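/- arXiv:1309.2512 — 2 statements merged into one kernel-verified Lean document; each statement's English description precedes it below -/
import Mathlib

section
/- For all hereditarily finite sets x and y with ark(x) ≤ ark(y), one has ark(x ∪ {y}) = ark(y) + 1. -/
open ZFSet Finset

noncomputable section

abbrev HFSet := ZFSet.{0}

/-- The adjunctive hierarchy of hereditarily finite sets. -/
def A : ℕ → Set HFSet
  | 0 => {∅}
  | n + 1 => {∅} ∪ {z | ∃ x ∈ A n, ∃ y ∈ A n, z = insert y x}

/-- Integer-indexed version, with `A n = ∅` for `n < 0`. -/
def Az (n : ℤ) : Set HFSet := if 0 ≤ n then A n.toNat else ∅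

/-- The cumulative hierarchy (von Neumann) of hereditarily finite sets. -/
def W : ℕ → HFSet
  | 0 => ∅
  | n + 1 => ZFSet.powerset (W n)

/-- A ZF set is hereditarily finite if it lies in some finite level of the
cumulative hierarchy. -/
def IsHF (x : HFSet) : Prop := ∃ n, x ∈ W n

/-- The adjunctive rank. -/
def ark (x : HFSet) : ℕ := sInf {n | x ∈ A n}

/-- The (von Neumann) rank of a hereditarily finite set. -/
def rk (x : HFSet) : ℕ := sInf {n | x ∈ W (n + 1)}

/-- `B n m` = sets in `A n \ A (n-1)` all of whose elements lie in `A m`. -/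
def B (n m : ℤ) : Set HFSet :=
  {x | x ∈ Az n ∧ x ∉ Az (n - 1) ∧ ∀ y, y ∈ x → y ∈ Az m}

def b (n m : ℤ) : ℕ := (B n m).ncard

def a (n : ℕ) : ℕ := (A n).ncard

def c (n : ℕ) : ℕ := (Az n \ Az ((n : ℤ) - 1)).ncard

lemma empty_mem_A (n : ℕ) : (∅ : HFSet) ∈ A n := by
  cases n with
  | zero => exact rfl
  | succ n => exact Or.inl rfl

lemma A_succ_subset (n : ℕ) : A n ⊆ A (n + 1) := by
  induction n with
  | zero => intro z hz; exact Or.inl hz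
  | succ n ih =>
    rintro z (hz | ⟨x, hx, y, hy, rfl⟩)
    · exact Or.inl hz
    · exact Or.inr ⟨x, ih hx, y, ih hy, rfl⟩

lemma A_mono {m n : ℕ} (h : m ≤ n) : A m ⊆ A n := by
  induction h with
  | refl => exact fun _ h => h
  | step _ ih => exact fun z hz => A_succ_subset _ (ih hz)

lemma mem_A_of_mem {n : ℕ} {z w : HFSet} (hz : z ∈ A n) (hw : w ∈ z) : w ∈ A n := by
  induction n generalizing z with
  | zero =>
    cases hz; exact absurd hw (ZFSet.notMem_empty w)
  | succ n ih =>
    rcases hz with hz | ⟨x, hx, y, hy, rfl⟩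
    · cases hz; exact absurd hw (ZFSet.notMem_empty w)
    · rcases ZFSet.mem_insert_iff.1 hw with rfl | hw
      · exact A_succ_subset n hy
      · exact A_succ_subset n (ih hx hw)

lemma W_toSet_finite (n : ℕ) : (W n).toSet.Finite := by
  induction n with
  | zero => exact Set.finite_empty.subset (fun u hu => ZFSet.notMem_empty u hu)
  | succ n ih =>
    have h1 : {s | s ⊆ (W n).toSet}.Finite := ih.finite_subsets
    have h2 : (ZFSet.toSet ⁻¹' {s | s ⊆ (W n).toSet}).Finite :=
      h1.preimage ((SetLike.coe_injective (A := HFSet)).injOn)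
    refine h2.subset ?_
    intro z hz
    simp only [Set.mem_preimage, Set.mem_setOf_eq]
    intro w hw
    exact ZFSet.mem_powerset.1 hz hw

lemma mem_A_of_forall (k : ℕ) : ∀ z : HFSet, z.toSet.Finite → z.toSet.ncard = k →
    (∀ w ∈ z, ∃ m, w ∈ A m) → ∃ m, z ∈ A m := by
  induction k with
  | zero =>
    intro z hfin hcard _
    have : z.toSet = ∅ := (Set.ncard_eq_zero hfin).1 hcard
    have : z = ∅ := by
      rw [ZFSet.eq_empty]; intro w hw
      exact absurd ((Set.ext_iff.1 this w).1 hw) (Set.notMem_empty w)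
    exact ⟨0, this ▸ empty_mem_A 0⟩
  | succ k ih =>
    intro z hfin hcard hall
    have hne : z.toSet.Nonempty := by
      rw [Set.nonempty_iff_ne_empty]
      intro he
      rw [he] at hcard; simp at hcard
    obtain ⟨w, hw⟩ := hne
    set z' := ZFSet.sep (fun u => u ≠ w) z with hz'
    have hz'mem : ∀ u, u ∈ z' ↔ u ∈ z ∧ u ≠ w := fun u => ZFSet.mem_sep
    have htoSet : z'.toSet = z.toSet \ {w} := by
      ext u
      exact hz'mem u
    have hfin' : z'.toSet.Finite := htoSet ▸ hfin.diff
    have hcard' : z'.toSet.ncard = k := by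
      rw [htoSet, Set.ncard_diff_singleton_of_mem hw, hcard]
      omega
    obtain ⟨m1, hm1⟩ := ih z' hfin' hcard' (fun u hu => hall u ((hz'mem u).1 hu).1)
    obtain ⟨m2, hm2⟩ := hall w hw
    have heq : z = insert w z' := by
      apply ZFSet.ext; intro u
      simp only [ZFSet.mem_insert_iff, hz'mem u]
      constructor
      · intro hu
        by_cases h : u = w
        · exact Or.inl h
        · exact Or.inr ⟨hu, h⟩
      · rintro (rfl | ⟨hu, _⟩)
        · exact hw
        · exact hu
    refine ⟨max m1 m2 + 1, ?_⟩
    rw [heq]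
    exact Or.inr ⟨z', A_mono (le_max_left _ _) hm1, w, A_mono (le_max_right _ _) hm2, rfl⟩

lemma W_sub_A (n : ℕ) : ∀ x ∈ W n, ∃ m, x ∈ A m := by
  induction n with
  | zero => exact fun x hn => absurd hn (ZFSet.notMem_empty x)
  | succ n ih =>
    intro x hn
    have hsub : x ⊆ W n := ZFSet.mem_powerset.1 hn
    have hfin : x.toSet.Finite := (W_toSet_finite n).subset (fun u hu => hsub hu)
    exact mem_A_of_forall x.toSet.ncard x hfin rfl (fun w hw => ih w (hsub hw))

lemma isHF_mem_A {x : HFSet} (hx : IsHF x) : ∃ n, x ∈ A n := by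
  obtain ⟨n, hn⟩ := hx; exact W_sub_A n x hn

lemma ark_spec {x : HFSet} (hx : ∃ n, x ∈ A n) : x ∈ A (ark x) := Nat.sInf_mem hx

lemma ark_le {x : HFSet} {n : ℕ} (hn : x ∈ A n) : ark x ≤ n := Nat.sInf_le hn

theorem stmt3 (x y : HFSet) (hx : IsHF x) (hy : IsHF y) (h : ark x ≤ ark y) :
    ark (insert y x) = ark y + 1 := by
  obtain ⟨_, hxA⟩ := isHF_mem_A hx
  obtain ⟨_, hyA⟩ := isHF_mem_A hy
  have hxa : x ∈ A (ark y) := A_mono h (ark_spec ⟨_, hxA⟩)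
  have hya : y ∈ A (ark y) := ark_spec ⟨_, hyA⟩
  have hupper : ark (insert y x) ≤ ark y + 1 :=
    ark_le (Or.inr ⟨x, hxa, y, hya, rfl⟩)
  refine le_antisymm hupper ?_
  have hmem : insert y x ∈ A (ark (insert y x)) :=
    ark_spec ⟨ark y + 1, Or.inr ⟨x, hxa, y, hya, rfl⟩⟩
  set m := ark (insert y x) with hm
  match m, hmem with
  | 0, hmem =>
    exfalso
    have : insert y x = (∅ : HFSet) := hmem
    exact ZFSet.notMem_empty y (this ▸ ZFSet.mem_insert y x)
  | k + 1, hmem =>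
    rcases hmem with hmem | ⟨x', hx', y', hy', heq⟩
    · exfalso
      have : insert y x = (∅ : HFSet) := hmem
      exact ZFSet.notMem_empty y (this ▸ ZFSet.mem_insert y x)
    · have hy2 : y ∈ insert y' x' := heq ▸ ZFSet.mem_insert y x
      have : y ∈ A k := by
        rcases ZFSet.mem_insert_iff.1 hy2 with rfl | hy2
        · exact hy'
        · exact mem_A_of_mem hx' hy2
      have := ark_le this
      omega
end
end

section
/- If x ∈ B_{n,m} = { z ∈ A_n \ A_{n-1} : z ⊆ A_m } with n > m ≥ 0, then |x ∩ (A_m \ A_{m-1})| ≤ n − m. -/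
open ZFSet Finset

noncomputable section

theorem ZFSet.mem_toSet (a u : HFSet) : a ∈ u.toSet ↔ a ∈ u := Iff.rfl

lemma A_succ_mem_iff {n : ℕ} {x : HFSet} :
    x ∈ A (n + 1) ↔ x = ∅ ∨ ∃ z ∈ A n, ∃ y ∈ A n, x = insert y z := by
  simp [A, Set.mem_union, Set.mem_setOf_eq]

lemma A_mono_s6 : ∀ n, A n ⊆ A (n + 1) := by
  intro n
  induction n with
  | zero =>
    intro x hx
    simp only [A] at hx ⊢
    exact Or.inl hx
  | succ n ih =>
    intro x hx
    rcases A_succ_mem_iff.mp hx with rfl | ⟨z, hz, y, hy, rfl⟩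
    · exact A_succ_mem_iff.mpr (Or.inl rfl)
    · exact A_succ_mem_iff.mpr (Or.inr ⟨z, ih hz, y, ih hy, rfl⟩)

lemma mem_of_mem_A : ∀ n (x y : HFSet), x ∈ A (n + 1) → y ∈ x → y ∈ A n := by
  intro n
  induction n with
  | zero =>
    intro x y hx hy
    rcases A_succ_mem_iff.mp hx with rfl | ⟨z, hz, a, ha, rfl⟩
    · exact absurd hy (ZFSet.notMem_empty y)
    · simp only [A, Set.mem_singleton_iff] at hz ha ⊢
      subst hz; subst ha
      rcases ZFSet.mem_insert_iff.mp hy with rfl | h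
      · rfl
      · exact absurd h (ZFSet.notMem_empty y)
  | succ n ih =>
    intro x y hx hy
    rcases A_succ_mem_iff.mp hx with rfl | ⟨z, hz, a, ha, rfl⟩
    · exact absurd hy (ZFSet.notMem_empty y)
    · rcases ZFSet.mem_insert_iff.mp hy with rfl | h
      · exact ha
      · exact A_mono_s6 n (ih z y hz h)

lemma mem_Az_pred {m : ℕ} {y : HFSet} {x : HFSet} (hx : x ∈ A m) (hy : y ∈ x) :
    y ∈ Az ((m : ℤ) - 1) := by
  match m with
  | 0 =>
    simp only [A, Set.mem_singleton_iff] at hx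
    subst hx
    exact absurd hy (ZFSet.notMem_empty y)
  | k + 1 =>
    have h : ((k + 1 : ℕ) : ℤ) - 1 = (k : ℤ) := by push_cast; ring
    rw [h]
    simp only [Az, Int.toNat_natCast, if_pos (Int.natCast_nonneg k)]
    exact mem_of_mem_A k x y hx hy

lemma base_empty (m : ℕ) (x : HFSet) (hx : x ∈ A m) :
    x.toSet \ Az ((m : ℤ) - 1) = ∅ := by
  ext y
  simp only [Set.mem_diff, ZFSet.mem_toSet, Set.mem_empty_iff_false, iff_false, not_and,
    not_not]
  intro hy
  exact mem_Az_pred hx hy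

lemma key (m : ℕ) : ∀ n (x : HFSet), m ≤ n → x ∈ A n →
    (x.toSet \ Az ((m : ℤ) - 1)).Finite ∧ (x.toSet \ Az ((m : ℤ) - 1)).ncard ≤ n - m := by
  intro n
  induction n with
  | zero =>
    intro x hmn hx
    interval_cases m
    rw [base_empty 0 x hx]
    exact ⟨Set.finite_empty, by simp⟩
  | succ n ih =>
    intro x hmn hx
    by_cases hm : m = n + 1
    · subst hm
      rw [base_empty _ x hx]
      exact ⟨Set.finite_empty, by simp⟩
    · have hmn' : m ≤ n := by omega
      rcases A_succ_mem_iff.mp hx with rfl | ⟨z, hz, a, ha, rfl⟩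
      · have : (∅ : HFSet).toSet \ Az ((m : ℤ) - 1) = ∅ := by
          ext y; simp [ZFSet.mem_toSet, ZFSet.notMem_empty]
        rw [this]
        exact ⟨Set.finite_empty, by simp⟩
      · obtain ⟨hf, hc⟩ := ih z hmn' hz
        have hsub : (insert a z).toSet \ Az ((m : ℤ) - 1) ⊆
            insert a (z.toSet \ Az ((m : ℤ) - 1)) := by
          rintro y ⟨hy1, hy2⟩
          rw [ZFSet.mem_toSet] at hy1
          rcases ZFSet.mem_insert_iff.mp hy1 with rfl | h
          · exact Set.mem_insert _ _
          · exact Set.mem_insert_of_mem _ ⟨(ZFSet.mem_toSet _ _).mpr h, hy2⟩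
        refine ⟨(hf.insert a).subset hsub, ?_⟩
        calc ((insert a z).toSet \ Az ((m : ℤ) - 1)).ncard
            ≤ (insert a (z.toSet \ Az ((m : ℤ) - 1))).ncard :=
              Set.ncard_le_ncard hsub (hf.insert a)
          _ ≤ (z.toSet \ Az ((m : ℤ) - 1)).ncard + 1 := Set.ncard_insert_le _ _
          _ ≤ n + 1 - m := by omega

theorem stmt6 (n m : ℕ) (hmn : m < n) (x : HFSet) (hx : x ∈ B n m) :
    (x.toSet ∩ (Az m \ Az ((m : ℤ) - 1))).ncard ≤ n - m := by
  have hxA : x ∈ A n := by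
    have := hx.1
    simpa [Az] using this
  obtain ⟨hf, hc⟩ := key m n x hmn.le hxA
  have hsub : x.toSet ∩ (Az m \ Az ((m : ℤ) - 1)) ⊆ x.toSet \ Az ((m : ℤ) - 1) := by
    rintro y ⟨hy1, hy2, hy3⟩
    exact ⟨hy1, hy3⟩
  exact le_trans (Set.ncard_le_ncard hsub hf) hc
end
end
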